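/- arXiv:2407.04824 — 4 statements merged into one kernel-verified Lean document; each statement's English description precedes it below -/
import Mathlib

section
/- Let X be a finite set, Φ : X → ℝ≥0 a nonnegative weight function, and k ≥ 1 a natural number with Σ_{x∈X} Φ(x) ≤ k. Then there exists a partition of X into k+1 (possibly empty) pairwise disjoint sets X_0, X_1, …, X_k whose union is X such that |X_0| ≤ k and Σ_{x∈X_i} Φ(x) < 1 for each i = 1, 2, …, k. -/
/-- **Greedy packing.** A finite set of items with nonnegative weights of total weight
at most `k` (where `k ≥ 1`) can be partitioned into `k` groups each of weight strictly
less than `1`, plus a leftover set of at most `k` items. -/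
theorem greedy_packing
    {α : Type*} [DecidableEq α]
    (X : Finset α) (Φ : α → ℝ) (hΦ : ∀ x ∈ X, 0 ≤ Φ x)
    (k : ℕ) (hk : 1 ≤ k) (hsum : ∑ x ∈ X, Φ x ≤ (k : ℝ)) :
    ∃ part : Fin (k + 1) → Finset α,
      (∀ i j, i ≠ j → Disjoint (part i) (part j)) ∧
      (Finset.univ.biUnion part = X) ∧
      (part 0).card ≤ k ∧
      (∀ i : Fin (k + 1), i ≠ 0 → ∑ x ∈ part i, Φ x < 1) := by
  classical
  suffices h : ∀ X : Finset α, (∀ x ∈ X, 0 ≤ Φ x) → ∑ x ∈ X, Φ x ≤ (k : ℝ) →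
      ∃ part : Fin (k + 1) → Finset α, ∃ f : α → Fin (k + 1),
        (∀ i j, i ≠ j → Disjoint (part i) (part j)) ∧
        (Finset.univ.biUnion part = X) ∧
        (∀ i : Fin (k + 1), i ≠ 0 → ∑ x ∈ part i, Φ x < 1) ∧
        (∀ a ∈ part 0, ∀ b ∈ part 0, f a = f b → a = b) ∧
        (∀ a ∈ part 0, f a ≠ 0 ∧ 1 ≤ (∑ x ∈ part (f a), Φ x) + Φ a) by
    obtain ⟨part, f, hdisj, hunion, hlt, hinj, hf⟩ := h X hΦ hsum
    refine ⟨part, hdisj, hunion, ?_, hlt⟩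
    have hcard : (part 0).card ≤ (Finset.univ.erase (0 : Fin (k + 1))).card := by
      apply Finset.card_le_card_of_injOn f
      · intro a ha
        exact Finset.mem_erase.mpr ⟨(hf a ha).1, Finset.mem_univ _⟩
      · exact hinj
    simpa using hcard
  clear hΦ hsum X
  intro X
  induction X using Finset.induction_on with
  | empty =>
    intro _ _
    refine ⟨fun _ => ∅, fun _ => 0, fun i j _ => by simp, ?_, by simp, by simp, by simp⟩
    ext y; simp
  | @insert x s hx ih =>
    intro hne hs
    have hΦx : 0 ≤ Φ x := hne x (Finset.mem_insert_self _ _)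
    have hne' : ∀ y ∈ s, 0 ≤ Φ y := fun y hy => hne y (Finset.mem_insert_of_mem hy)
    have hsum_ins : ∑ y ∈ insert x s, Φ y = Φ x + ∑ y ∈ s, Φ y := Finset.sum_insert hx
    have hs' : ∑ y ∈ s, Φ y ≤ (k : ℝ) := by
      rw [hsum_ins] at hs; linarith
    obtain ⟨part, f, hdisj, hunion, hlt, hinj, hf⟩ := ih hne' hs'
    have hxnot : ∀ i, x ∉ part i := by
      intro i hxi
      exact hx (hunion ▸ Finset.mem_biUnion.mpr ⟨i, Finset.mem_univ i, hxi⟩)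
    by_cases hcase : ∃ i : Fin (k + 1), i ≠ 0 ∧ (∑ y ∈ part i, Φ y) + Φ x < 1
    · -- we can add x into bin i
      obtain ⟨i, hi0, hilt⟩ := hcase
      set part' : Fin (k + 1) → Finset α :=
        fun j => if j = i then insert x (part i) else part j with hpart'
      have hp'ne : ∀ j, j ≠ i → part' j = part j := fun j hj => if_neg hj
      have hp'i : part' i = insert x (part i) := if_pos rfl
      refine ⟨part', f, ?_, ?_, ?_, ?_, ?_⟩
      · intro a b hab
        by_cases ha : a = i <;> by_cases hb : b = i
        · exact absurd (ha.trans hb.symm) hab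
        · rw [ha, hp'i, hp'ne b hb, Finset.disjoint_insert_left]
          exact ⟨hxnot b, hdisj i b (ha ▸ hab)⟩
        · rw [hb, hp'i, hp'ne a ha, Finset.disjoint_insert_right]
          exact ⟨hxnot a, hdisj a i (hb ▸ hab)⟩
        · rw [hp'ne a ha, hp'ne b hb]; exact hdisj a b hab
      · ext y
        simp only [Finset.mem_biUnion, Finset.mem_univ, true_and, Finset.mem_insert]
        constructor
        · rintro ⟨j, hj⟩
          rcases eq_or_ne j i with rfl | hne2
          · rw [hp'i, Finset.mem_insert] at hj
            rcases hj with rfl | hj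
            · exact Or.inl rfl
            · exact Or.inr (hunion ▸ Finset.mem_biUnion.mpr ⟨j, Finset.mem_univ _, hj⟩)
          · rw [hp'ne j hne2] at hj
            exact Or.inr (hunion ▸ Finset.mem_biUnion.mpr ⟨j, Finset.mem_univ _, hj⟩)
        · rintro (rfl | hy)
          · exact ⟨i, by rw [hp'i]; exact Finset.mem_insert_self _ _⟩
          · obtain ⟨j, _, hj⟩ := Finset.mem_biUnion.mp (hunion ▸ hy : y ∈ Finset.univ.biUnion part)
            by_cases hne2 : j = i
            · exact ⟨i, by rw [hp'i]; exact Finset.mem_insert_of_mem (hne2 ▸ hj)⟩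
            · exact ⟨j, by rw [hp'ne j hne2]; exact hj⟩
      · intro j hj
        rcases eq_or_ne j i with rfl | hne2
        · rw [hp'i, Finset.sum_insert (hxnot j)]; linarith
        · rw [hp'ne j hne2]; exact hlt j hj
      · have h0 : part' 0 = part 0 := hp'ne 0 (Ne.symm hi0)
        rw [h0]; exact hinj
      · have h0 : part' 0 = part 0 := hp'ne 0 (Ne.symm hi0)
        rw [h0]
        intro a ha
        refine ⟨(hf a ha).1, ?_⟩
        have := (hf a ha).2
        rcases eq_or_ne (f a) i with heq | hne2
        · rw [heq, hp'i, Finset.sum_insert (hxnot i)]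
          rw [heq] at this; linarith
        · rw [hp'ne _ hne2]; exact this
    · -- all bins would overflow; put x into the leftover set
      push_neg at hcase
      -- total sum over s via the partition
      have hsum_part : ∑ y ∈ s, Φ y = ∑ i : Fin (k + 1), ∑ y ∈ part i, Φ y := by
        rw [← hunion, Finset.sum_biUnion]
        intro a ha b hb hab
        exact hdisj a b hab
      have hcard : (part 0).card < k := by
        by_contra hge
        push_neg at hge
        -- image of part 0 under f
        have himsub : (part 0).image f ⊆ Finset.univ.erase (0 : Fin (k + 1)) := by
          intro j hj
          obtain ⟨a, ha, rfl⟩ := Finset.mem_image.mp hj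
          exact Finset.mem_erase.mpr ⟨(hf a ha).1, Finset.mem_univ _⟩
        have himcard : ((part 0).image f).card = (part 0).card :=
          Finset.card_image_of_injOn hinj
        have hkcard : (Finset.univ.erase (0 : Fin (k + 1))).card = k := by simp
        have himeq : (part 0).image f = Finset.univ.erase (0 : Fin (k + 1)) := by
          apply Finset.eq_of_subset_of_card_le himsub
          rw [hkcard, himcard]; exact hge
        have hbig : (k : ℝ) ≤ ∑ y ∈ s, Φ y := by
          have h1 : ∑ a ∈ part 0, ((∑ y ∈ part (f a), Φ y) + Φ a)
              = (∑ j ∈ (part 0).image f, ∑ y ∈ part j, Φ y) + ∑ a ∈ part 0, Φ a := by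
            rw [Finset.sum_image hinj, Finset.sum_add_distrib]
          have h2 : (k : ℝ) ≤ ∑ a ∈ part 0, ((∑ y ∈ part (f a), Φ y) + Φ a) := by
            calc (k : ℝ) ≤ ((part 0).card : ℝ) := by exact_mod_cast hge
            _ = ∑ _a ∈ part 0, (1 : ℝ) := by simp
            _ ≤ _ := Finset.sum_le_sum (fun a ha => (hf a ha).2)
          have h3 : ∑ y ∈ s, Φ y
              = (∑ j ∈ Finset.univ.erase (0 : Fin (k + 1)), ∑ y ∈ part j, Φ y)
                + ∑ a ∈ part 0, Φ a := by
            rw [hsum_part, ← Finset.sum_erase_add _ _ (Finset.mem_univ (0 : Fin (k + 1)))]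
          rw [h1, himeq] at h2
          linarith [h2, h3.ge]
        have hΦx0 : Φ x ≤ 0 := by
          rw [hsum_ins] at hs; linarith
        have h1ne : (1 : Fin (k + 1)) ≠ 0 := by
          have : (1 : ℕ) < k + 1 := by omega
          simp [Fin.ext_iff, Fin.val_one, Nat.mod_eq_of_lt this]
        have := hcase 1 h1ne
        have := hlt 1 h1ne
        linarith
      -- find an unused nonzero bin g
      have himsub : (part 0).image f ⊆ Finset.univ.erase (0 : Fin (k + 1)) := by
        intro j hj
        obtain ⟨a, ha, rfl⟩ := Finset.mem_image.mp hj
        exact Finset.mem_erase.mpr ⟨(hf a ha).1, Finset.mem_univ _⟩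
      have hlt' : ((part 0).image f).card < (Finset.univ.erase (0 : Fin (k + 1))).card := by
        rw [Finset.card_image_of_injOn hinj]
        simpa using hcard
      have hss : (part 0).image f ⊂ Finset.univ.erase (0 : Fin (k + 1)) :=
        Finset.ssubset_def.mpr ⟨himsub, fun h => absurd (Finset.card_le_card h) (by omega)⟩
      obtain ⟨g, hg_mem, hg_not⟩ := Finset.exists_of_ssubset hss
      have hg0 : g ≠ 0 := (Finset.mem_erase.mp hg_mem).1
      set part' : Fin (k + 1) → Finset α :=
        fun j => if j = 0 then insert x (part 0) else part j with hpart'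
      set f' : α → Fin (k + 1) := fun a => if a = x then g else f a with hf'
      have hp'ne : ∀ j, j ≠ 0 → part' j = part j := fun j hj => if_neg hj
      have hp'0 : part' 0 = insert x (part 0) := if_pos rfl
      refine ⟨part', f', ?_, ?_, ?_, ?_, ?_⟩
      · intro a b hab
        by_cases ha : a = 0 <;> by_cases hb : b = 0
        · exact absurd (ha.trans hb.symm) hab
        · rw [ha, hp'0, hp'ne b hb, Finset.disjoint_insert_left]
          exact ⟨hxnot b, hdisj 0 b (ha ▸ hab)⟩
        · rw [hb, hp'0, hp'ne a ha, Finset.disjoint_insert_right]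
          exact ⟨hxnot a, hdisj a 0 (hb ▸ hab)⟩
        · rw [hp'ne a ha, hp'ne b hb]; exact hdisj a b hab
      · ext y
        simp only [Finset.mem_biUnion, Finset.mem_univ, true_and, Finset.mem_insert]
        constructor
        · rintro ⟨j, hj⟩
          rcases eq_or_ne j 0 with rfl | hne2
          · rw [hp'0, Finset.mem_insert] at hj
            rcases hj with rfl | hj
            · exact Or.inl rfl
            · exact Or.inr (hunion ▸ Finset.mem_biUnion.mpr ⟨0, Finset.mem_univ _, hj⟩)
          · rw [hp'ne j hne2] at hj
            exact Or.inr (hunion ▸ Finset.mem_biUnion.mpr ⟨j, Finset.mem_univ _, hj⟩)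
        · rintro (rfl | hy)
          · exact ⟨0, by rw [hp'0]; exact Finset.mem_insert_self _ _⟩
          · obtain ⟨j, _, hj⟩ := Finset.mem_biUnion.mp (hunion ▸ hy : y ∈ Finset.univ.biUnion part)
            by_cases hne2 : j = 0
            · exact ⟨0, by rw [hp'0]; exact Finset.mem_insert_of_mem (hne2 ▸ hj)⟩
            · exact ⟨j, by rw [hp'ne j hne2]; exact hj⟩
      · intro j hj
        rw [hp'ne j hj]; exact hlt j hj
      · rw [hp'0]
        intro a ha b hb hfab
        have hmemx : ∀ c ∈ part 0, c ≠ x := fun c hc hcx => hxnot 0 (hcx ▸ hc)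
        rcases Finset.mem_insert.mp ha with rfl | ha' <;>
          rcases Finset.mem_insert.mp hb with rfl | hb'
        · rfl
        · exfalso
          have hb'' : f' b = f b := by simp [hf', hmemx b hb']
          have ha'' : f' a = g := by simp [hf']
          rw [ha'', hb''] at hfab
          exact hg_not (Finset.mem_image.mpr ⟨b, hb', hfab.symm⟩)
        · exfalso
          have ha'' : f' a = f a := by simp [hf', hmemx a ha']
          have hb'' : f' b = g := by simp [hf']
          rw [ha'', hb''] at hfab
          exact hg_not (Finset.mem_image.mpr ⟨a, ha', hfab⟩)
        · have ha'' : f' a = f a := by simp [hf', hmemx a ha']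
          have hb'' : f' b = f b := by simp [hf', hmemx b hb']
          rw [ha'', hb''] at hfab
          exact hinj a ha' b hb' hfab
      · rw [hp'0]
        intro a ha
        rcases Finset.mem_insert.mp ha with rfl | ha'
        · have ha'' : f' a = g := by simp [hf']
          rw [ha'', hp'ne g hg0]
          exact ⟨hg0, hcase g hg0⟩
        · have hax : a ≠ x := fun hax => hxnot 0 (hax ▸ ha')
          have ha'' : f' a = f a := by simp [hf', hax]
          rw [ha'', hp'ne _ (hf a ha').1]
          exact hf a ha'
end

section
/- Let f be a normalized monotone submodular set function on a finite ground set E with f({e}) ≤ 1/40 for every e ∈ E and f(E) ≥ 1/2. Let Φ : E → ℝ≥0 be a nonnegative weight function with Σ_{e∈E} Φ(e) ≤ 10. Then there exists a subset S ⊆ E with Σ_{e∈S} Φ(e) < 1 and f(S) ≥ 1/40. -/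
/-!
Suppose no set of weight below 1 had value at least `c`. From any set of weight at least 1 one
can split off a piece of weight at least `1/2` and value at most `c`: a single element of weight
at least 1 (singleton bound), or, when all weights are below 1, a subset of weight in `[1/2, 1)`.
Since a submodular `f` with `f ∅ = 0` is subadditive on disjoint unions, peeling off such pieces
shows that a set of weight at most `(n + 1) / 2` has value below `(n + 1) * c`; with total weight
`10 = 20 / 2` and `c = 1/40` this contradicts `f E ≥ 1/2`.
-/

open Finset

section

variable {E : Type*} [DecidableEq E]

theorem Finset.exists_subset_sum_mem_Ico {M : Type*} [AddCommMonoid M] [LinearOrder M]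
    [IsOrderedCancelAddMonoid M] (Φ : E → M) {a b : M} (ha : 0 < a) (hab : a + a ≤ b)
    (A : Finset E) (hlt : ∀ e ∈ A, Φ e < b) (hA : a ≤ ∑ e ∈ A, Φ e) :
    ∃ B ⊆ A, a ≤ ∑ e ∈ B, Φ e ∧ ∑ e ∈ B, Φ e < b := by
  induction A using Finset.strongInduction with
  | H A ih =>
    obtain ⟨e, he⟩ : A.Nonempty := by
      by_contra hA0
      simp only [not_nonempty_iff_eq_empty.mp hA0, sum_empty] at hA
      exact ha.not_ge hA
    by_cases hea : a ≤ Φ e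
    · exact ⟨{e}, singleton_subset_iff.mpr he, by simpa using hea, by simpa using hlt e he⟩
    by_cases hrest : a ≤ ∑ x ∈ A.erase e, Φ x
    · obtain ⟨B, hBA, hB⟩ :=
        ih _ (erase_ssubset he) (fun x hx => hlt x (mem_of_mem_erase hx)) hrest
      exact ⟨B, hBA.trans (erase_subset e A), hB⟩
    refine ⟨A, subset_rfl, hA, ?_⟩
    rw [← add_sum_erase A Φ he]
    exact (add_lt_add (not_le.mp hea) (not_le.mp hrest)).trans_le hab

theorem add_empty_le_add_of_disjoint (f : Finset E → ℝ)
    (hsub : ∀ A B : Finset E, A ⊆ B → ∀ r ∉ B,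
      f (insert r B) - f B ≤ f (insert r A) - f A)
    {X Y : Finset E} (hXY : Disjoint X Y) : f (X ∪ Y) + f ∅ ≤ f X + f Y := by
  induction X using Finset.induction_on with
  | empty => simp [add_comm]
  | insert a X ha ih =>
    rw [disjoint_insert_left] at hXY
    have hstep := hsub X (X ∪ Y) subset_union_left a (by simp [ha, hXY.1])
    rw [insert_union]
    linarith [ih hXY.2]

variable (f : Finset E → ℝ) (Φ : E → ℝ) {c : ℝ}

theorem exists_subset_half_le_sum_and_le (hsing : ∀ e, f {e} ≤ c)
    (hcheap : ∀ S : Finset E, ∑ e ∈ S, Φ e < 1 → f S < c)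
    (A : Finset E) (hA : 1 ≤ ∑ e ∈ A, Φ e) :
    ∃ B ⊆ A, 1 / 2 ≤ ∑ e ∈ B, Φ e ∧ f B ≤ c := by
  by_cases hheavy : ∃ e ∈ A, 1 ≤ Φ e
  · obtain ⟨e, he, hΦe⟩ := hheavy
    exact ⟨{e}, singleton_subset_iff.mpr he, by rw [sum_singleton]; linarith, hsing e⟩
  push Not at hheavy
  obtain ⟨B, hBA, hB, hB1⟩ :=
    A.exists_subset_sum_mem_Ico Φ (by norm_num : (0 : ℝ) < 1 / 2) (by norm_num) hheavy
      (by linarith)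
  exact ⟨B, hBA, hB, (hcheap B hB1).le⟩

theorem lt_mul_of_sum_le_half (hnorm : f ∅ = 0)
    (hsub : ∀ A B : Finset E, A ⊆ B → ∀ r ∉ B,
      f (insert r B) - f B ≤ f (insert r A) - f A)
    (hsing : ∀ e, f {e} ≤ c) (hcheap : ∀ S : Finset E, ∑ e ∈ S, Φ e < 1 → f S < c)
    (n : ℕ) (A : Finset E) (hA : ∑ e ∈ A, Φ e ≤ (n + 1) / 2) : f A < (n + 1) * c := by
  have hc : 0 < c := by simpa [hnorm] using hcheap ∅ (by simp)
  induction n generalizing A with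
  | zero => simpa using hcheap A (by push_cast at hA; linarith)
  | succ n ih =>
    by_cases hA1 : ∑ e ∈ A, Φ e < 1
    · nlinarith [hcheap A hA1, (n.cast_nonneg : (0 : ℝ) ≤ n)]
    obtain ⟨B, hBA, hB, hfB⟩ :=
      exists_subset_half_le_sum_and_le f Φ hsing hcheap A (not_lt.mp hA1)
    have hrest : f (A \ B) < (n + 1) * c := by
      refine ih (A \ B) ?_
      rw [sum_sdiff_eq_sub hBA]
      push_cast at hA
      linarith
    have hsplit := add_empty_le_add_of_disjoint f hsub (disjoint_sdiff : Disjoint B (A \ B))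
    rw [union_sdiff_of_subset hBA, hnorm] at hsplit
    push_cast
    linarith

end

theorem extract_cheap_valuable_subset_general
    {E : Type*} [Fintype E] [DecidableEq E]
    (f : Finset E → ℝ)
    (hnorm : f ∅ = 0)
    (hsub : ∀ A B : Finset E, A ⊆ B → ∀ r ∉ B,
      f (insert r B) - f B ≤ f (insert r A) - f A)
    (hsing : ∀ e : E, f {e} ≤ 1 / 40)
    (hbig : 1 / 2 ≤ f Finset.univ)
    (Φ : E → ℝ)
    (hΦsum : ∑ e : E, Φ e ≤ 10) :
    ∃ S : Finset E, (∑ e ∈ S, Φ e < 1) ∧ 1 / 40 ≤ f S := by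
  by_contra! hcheap
  have := lt_mul_of_sum_le_half f Φ hnorm hsub hsing hcheap 19 univ (by norm_num; linarith)
  norm_num at this
  linarith

/-- **Extraction step in rounding the separation problem.** If `f` is a normalized
monotone submodular function on a finite ground set `E` with all singleton values at
most `1/40` and `f(E) ≥ 1/2`, and `Φ` is a nonnegative weight function with total
weight at most `10`, then there is a subset `S ⊆ E` of weight less than `1` with
`f(S) ≥ 1/40`. -/
theorem extract_cheap_valuable_subset
    {E : Type*} [Fintype E] [DecidableEq E]
    (f : Finset E → ℝ)
    (hnorm : f ∅ = 0)
    (hmono : ∀ A B : Finset E, A ⊆ B → f A ≤ f B)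
    (hsub : ∀ A B : Finset E, A ⊆ B → ∀ r ∉ B,
      f (insert r B) - f B ≤ f (insert r A) - f A)
    (hsing : ∀ e : E, f {e} ≤ 1 / 40)
    (hbig : 1 / 2 ≤ f Finset.univ)
    (Φ : E → ℝ) (hΦ : ∀ e, 0 ≤ Φ e)
    (hΦsum : ∑ e : E, Φ e ≤ 10) :
    ∃ S : Finset E, (∑ e ∈ S, Φ e < 1) ∧ 1 / 40 ≤ f S :=
  extract_cheap_valuable_subset_general f hnorm hsub hsing hbig Φ hΦsum
end

section
/- Consider a Santa Claus instance given by a finite set P of players, a finite set R of resources, and for each p ∈ P a normalized monotone submodular valuation f_p : 2^R → ℝ≥0, and fix a real γ ≥ 1. Form the canonical instance: the resource set is R′ = R ⊎ {r_p : p ∈ P} (one new private resource r_p per player p); the player set consists of a basic copy p′ and a complex copy p″ of each p ∈ P; with B_p = { r ∈ R : f_p({r}) ≥ 1/γ }, the valuations are f_{p′}(S) = 1 if S ∩ (B_p ∪ {r_p}) ≠ ∅ and f_{p′}(S) = 0 otherwise, and f_{p″}(S) = 1 if r_p ∈ S and f_{p″}(S) = f_p((S ∩ R) \ B_p) otherwise,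 for S ⊆ R′. If there exists an allocation σ : R → P with f_p(σ⁻¹(p)) ≥ 1 for every p ∈ P, then there exists an allocation σ′ : R′ → {p′ : p ∈ P} ∪ {p″ : p ∈ P} of the canonical instance under which every basic player p′ and every complex player p″ receives value at least 1, i.e., f_{p′}(σ′⁻¹(p′)) ≥ 1 and f_{p″}(σ′⁻¹(p″)) ≥ 1 for all p ∈ P. -/
open Classical in
/-- **From general instances to canonical instances (forward direction).**
If a Santa Claus instance with normalized monotone submodular valuations has an
allocation of value at least `1` for every player, then the associated canonical
instance (with a basic copy `p′` and complex copy `p″` of each player `p`, and an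
extra private resource `r_p` per player) admits an allocation under which every
basic and every complex player receives value at least `1`.
Resources of the canonical instance are modeled as `R ⊕ P` (`Sum.inl r` an original
resource, `Sum.inr p` the private resource `r_p`); players as `P ⊕ P`
(`Sum.inl p` the basic copy `p′`, `Sum.inr p` the complex copy `p″`). -/
theorem canonical_instance_forward
    {P R : Type*} [Fintype P] [Fintype R] [DecidableEq P] [DecidableEq R]
    (f : P → Finset R → ℝ)
    (hnorm : ∀ p, f p ∅ = 0)
    (hmono : ∀ p, ∀ A B : Finset R, A ⊆ B → f p A ≤ f p B)
    (hsub : ∀ p, ∀ A B : Finset R, A ⊆ B → ∀ r ∉ B,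
      f p (insert r B) - f p B ≤ f p (insert r A) - f p A)
    (γ : ℝ) (hγ : 1 ≤ γ)
    -- `Bp p` is the set of big resources for player `p`
    (Bp : P → Finset R) (hBp : ∀ p r, r ∈ Bp p ↔ 1 / γ ≤ f p {r})
    -- valuation of the basic copy `p′`
    (fb : P → Finset (R ⊕ P) → ℝ)
    (hfb : ∀ p S, fb p S =
      if (∃ r ∈ Bp p, Sum.inl r ∈ S) ∨ Sum.inr p ∈ S then 1 else 0)
    -- valuation of the complex copy `p″`
    (fc : P → Finset (R ⊕ P) → ℝ)
    (hfc : ∀ p S, fc p S =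
      if Sum.inr p ∈ S then 1
      else f p ((Finset.univ.filter (fun r : R => Sum.inl r ∈ S)) \ Bp p))
    (σ : R → P)
    (hσ : ∀ p, 1 ≤ f p (Finset.univ.filter (fun r => σ r = p))) :
    ∃ σ' : R ⊕ P → P ⊕ P, ∀ p : P,
      1 ≤ fb p (Finset.univ.filter (fun x => σ' x = Sum.inl p)) ∧
      1 ≤ fc p (Finset.univ.filter (fun x => σ' x = Sum.inr p)) := by
  classical
  refine ⟨fun x => match x with
    | Sum.inl r => if r ∈ Bp (σ r) then Sum.inl (σ r) else Sum.inr (σ r)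
    | Sum.inr p => if ∃ r ∈ Bp p, σ r = p then Sum.inr p else Sum.inl p, ?_⟩
  intro p
  by_cases h : ∃ r ∈ Bp p, σ r = p
  · constructor
    · rw [hfb]
      rw [if_pos]
      · obtain ⟨r, hr, hσr⟩ := h
        left
        exact ⟨r, hr, by simp [hσr, hr]⟩
    · rw [hfc, if_pos]
      simp [h]
  · constructor
    · rw [hfb, if_pos]
      right
      simp [h]
    · rw [hfc, if_neg]
      · have hset : (Finset.univ.filter (fun r : R =>
            Sum.inl r ∈ Finset.univ.filter (fun x : R ⊕ P =>
              (match x with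
                | Sum.inl r => if r ∈ Bp (σ r) then Sum.inl (σ r) else Sum.inr (σ r)
                | Sum.inr p => if ∃ r ∈ Bp p, σ r = p then Sum.inr p else Sum.inl p)
              = Sum.inr p))) \ Bp p
            = Finset.univ.filter (fun r => σ r = p) := by
          ext r
          simp only [Finset.mem_sdiff, Finset.mem_filter, Finset.mem_univ, true_and]
          constructor
          · rintro ⟨hr, -⟩
            by_cases hb : r ∈ Bp (σ r) <;> simp [hb] at hr
            exact hr
          · intro hr
            have hb : r ∉ Bp p := fun hb => h ⟨r, hb, hr⟩
            exact ⟨by simp [hr, hb], hb⟩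
        rw [hset]
        exact hσ p
      · simp [h]
end

section
/- Consider a Santa Claus instance given by a finite set P of players, a finite set R of resources, and for each p ∈ P a normalized monotone submodular valuation f_p : 2^R → ℝ≥0, and fix a real γ ≥ 1. Form the canonical instance: the resource set is R′ = R ⊎ {r_p : p ∈ P} (one new private resource r_p per player p); the player set consists of a basic copy p′ and a complex copy p″ of each p ∈ P; with B_p = { r ∈ R : f_p({r}) ≥ 1/γ }, the valuations are f_{p′}(S) = 1 if S ∩ (B_p ∪ {r_p}) ≠ ∅ and f_{p′}(S) = 0 otherwise, and f_{p″}(S) = 1 if r_p ∈ S and f_{p″}(S) = f_p((S ∩ R) \ B_p) otherwise, for S ⊆ R′. If there exists an allocation σ′ : R′ → {p′ : p ∈ P} ∪ {p″ : p ∈ P} of the canonical instance under which every basic player p′ and every complex player p″ receives value at least 1/γ, then there exists an allocation σ : R → P with f_p(σ⁻¹(p)) ≥ 1/γ for every p ∈ P. -/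
open Classical in
/-- **From canonical instances back to general instances (backward direction).**
If the canonical instance (with a basic copy `p′` and complex copy `p″` of each
player `p`, and an extra private resource `r_p` per player) admits an allocation
under which every basic and every complex player receives value at least `1/γ`,
then the original Santa Claus instance admits an allocation giving every player
value at least `1/γ`.
Resources of the canonical instance are modeled as `R ⊕ P` (`Sum.inl r` an original
resource, `Sum.inr p` the private resource `r_p`); players as `P ⊕ P`
(`Sum.inl p` the basic copy `p′`, `Sum.inr p` the complex copy `p″`). -/
theorem canonical_instance_backward
    {P R : Type*} [Fintype P] [Fintype R] [DecidableEq P] [DecidableEq R]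
    (f : P → Finset R → ℝ)
    (hnorm : ∀ p, f p ∅ = 0)
    (hmono : ∀ p, ∀ A B : Finset R, A ⊆ B → f p A ≤ f p B)
    (hsub : ∀ p, ∀ A B : Finset R, A ⊆ B → ∀ r ∉ B,
      f p (insert r B) - f p B ≤ f p (insert r A) - f p A)
    (γ : ℝ) (hγ : 1 ≤ γ)
    -- `Bp p` is the set of big resources for player `p`
    (Bp : P → Finset R) (hBp : ∀ p r, r ∈ Bp p ↔ 1 / γ ≤ f p {r})
    -- valuation of the basic copy `p′`
    (fb : P → Finset (R ⊕ P) → ℝ)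
    (hfb : ∀ p S, fb p S =
      if (∃ r ∈ Bp p, Sum.inl r ∈ S) ∨ Sum.inr p ∈ S then 1 else 0)
    -- valuation of the complex copy `p″`
    (fc : P → Finset (R ⊕ P) → ℝ)
    (hfc : ∀ p S, fc p S =
      if Sum.inr p ∈ S then 1
      else f p ((Finset.univ.filter (fun r : R => Sum.inl r ∈ S)) \ Bp p))
    (σ' : R ⊕ P → P ⊕ P)
    (hσ' : ∀ p : P,
      1 / γ ≤ fb p (Finset.univ.filter (fun x => σ' x = Sum.inl p)) ∧
      1 / γ ≤ fc p (Finset.univ.filter (fun x => σ' x = Sum.inr p))) :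
    ∃ σ : R → P, ∀ p : P, 1 / γ ≤ f p (Finset.univ.filter (fun r => σ r = p)) := by
  have hγ0 : 0 < 1 / γ := by positivity
  refine ⟨fun r => (σ' (Sum.inl r)).elim id id, fun p => ?_⟩
  obtain ⟨hb, hc⟩ := hσ' p
  by_cases hpriv : σ' (Sum.inr p) = Sum.inr p
  · -- complex copy got the private resource; use the basic copy
    rw [hfb] at hb
    split_ifs at hb with hcond
    · rcases hcond with ⟨r, hrB, hr⟩ | hr
      · simp only [Finset.mem_filter, Finset.mem_univ, true_and] at hr
        have hsingle : {r} ⊆ Finset.univ.filter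
            (fun r : R => (σ' (Sum.inl r)).elim id id = p) := by
          intro x hx
          simp only [Finset.mem_singleton] at hx
          subst hx
          simp [hr]
        calc 1 / γ ≤ f p {r} := (hBp p r).mp hrB
          _ ≤ _ := hmono p _ _ hsingle
      · simp only [Finset.mem_filter, Finset.mem_univ, true_and, hpriv] at hr
        exact absurd hr (by simp)
    · linarith
  · -- complex copy did not get the private resource
    rw [hfc] at hc
    have h2 : Sum.inr p ∉ Finset.univ.filter (fun x => σ' x = Sum.inr p) := by
      simp [hpriv]
    rw [if_neg h2] at hc
    refine le_trans hc (hmono p _ _ ?_)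
    intro r hr
    simp only [Finset.mem_sdiff, Finset.mem_filter, Finset.mem_univ, true_and] at hr ⊢
    rw [hr.1]
    rfl
end
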